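/- A two-copy product test passes with certainty iff the state is product: for a unit vector ψ ∈ H_A⊗H_B⊗H_C, one has ‖Π₂^{⊗3} ψ^{⊗2}‖ = 1 if and only if ψ = a⊗b⊗c for some unit vectors a, b, c. -/

import Mathlib

open scoped InnerProductSpace BigOperators

noncomputable section

variable {dA dB dC : ℕ}

/-- The elementary product tensor `a ⊗ b ⊗ c` in `H_A ⊗ H_B ⊗ H_C`. -/
def prodVec3 (a : EuclideanSpace ℂ (Fin dA)) (b : EuclideanSpace ℂ (Fin dB))
    (c : EuclideanSpace ℂ (Fin dC)) :
    EuclideanSpace ℂ (Fin dA × Fin dB × Fin dC) :=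
  WithLp.toLp 2 fun p => a p.1 * b p.2.1 * c p.2.2

/-- Swap the two entries of a pair if `s = true`. -/
def sw {α : Type*} (s : Bool) (p : α × α) : α × α := if s then (p.2, p.1) else p

/-- `Π₂^{⊗3} ψ^{⊗2}`: two copies of `ψ` with tensor factors regrouped per party,
symmetrized over the two copies of each of the three local spaces
(`Π₂ = (1 + V)/2` on each party, yielding the overall prefactor `1/8`). -/
def F2 (ψ : EuclideanSpace ℂ (Fin dA × Fin dB × Fin dC)) :
    EuclideanSpace ℂ ((Fin dA × Fin dA) × (Fin dB × Fin dB) × (Fin dC × Fin dC)) :=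
  WithLp.toLp 2 fun x => (8 : ℂ)⁻¹ *
    ∑ s : Bool × Bool × Bool,
      ψ ((sw s.1 x.1).1, (sw s.2.1 x.2.1).1, (sw s.2.2 x.2.2).1) *
      ψ ((sw s.1 x.1).2, (sw s.2.1 x.2.1).2, (sw s.2.2 x.2.2).2)

lemma sw_sw {α : Type*} (s t : Bool) (p : α × α) : sw s (sw t p) = sw (xor s t) p := by
  cases s <;> cases t <;> simp [sw]

abbrev Idx2 (dA dB dC : ℕ) := (Fin dA × Fin dA) × (Fin dB × Fin dB) × (Fin dC × Fin dC)

def σ3 (s : Bool × Bool × Bool) (x : Idx2 dA dB dC) : Idx2 dA dB dC :=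
  (sw s.1 x.1, sw s.2.1 x.2.1, sw s.2.2 x.2.2)

def bxor3 (s t : Bool × Bool × Bool) : Bool × Bool × Bool :=
  (xor s.1 t.1, xor s.2.1 t.2.1, xor s.2.2 t.2.2)

lemma σ3_σ3 (s t : Bool × Bool × Bool) (x : Idx2 dA dB dC) :
    σ3 s (σ3 t x) = σ3 (bxor3 s t) x := by
  simp [σ3, bxor3, sw_sw]

lemma σ3_invol (s : Bool × Bool × Bool) :
    Function.Involutive (σ3 (dA := dA) (dB := dB) (dC := dC) s) := by
  intro x
  rw [σ3_σ3]
  obtain ⟨a, b, c⟩ := s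
  cases a <;> cases b <;> cases c <;> simp [σ3, bxor3, sw]

def σE (s : Bool × Bool × Bool) : Idx2 dA dB dC ≃ Idx2 dA dB dC := (σ3_invol s).toPerm

lemma bxor3_invol (t : Bool × Bool × Bool) : Function.Involutive (fun s => bxor3 s t) := by
  intro s
  obtain ⟨a, b, c⟩ := s; obtain ⟨a', b', c'⟩ := t
  cases a <;> cases b <;> cases c <;> cases a' <;> cases b' <;> cases c' <;> rfl

def Phi (ψ : EuclideanSpace ℂ (Fin dA × Fin dB × Fin dC)) :
    EuclideanSpace ℂ (Idx2 dA dB dC) :=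
  WithLp.toLp 2 fun x => ψ (x.1.1, x.2.1.1, x.2.2.1) * ψ (x.1.2, x.2.1.2, x.2.2.2)

lemma F2_eq (ψ : EuclideanSpace ℂ (Fin dA × Fin dB × Fin dC)) (x : Idx2 dA dB dC) :
    F2 ψ x = (8:ℂ)⁻¹ * ∑ s : Bool × Bool × Bool, Phi ψ (σ3 s x) := rfl

/-- split equiv -/
def eSplit : ((Fin dA × Fin dB × Fin dC) × (Fin dA × Fin dB × Fin dC)) ≃ Idx2 dA dB dC where
  toFun := fun pq => ((pq.1.1, pq.2.1), (pq.1.2.1, pq.2.2.1), (pq.1.2.2, pq.2.2.2))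
  invFun := fun x => ((x.1.1, x.2.1.1, x.2.2.1), (x.1.2, x.2.1.2, x.2.2.2))
  left_inv := fun _ => rfl
  right_inv := fun _ => rfl

lemma norm_Phi (ψ : EuclideanSpace ℂ (Fin dA × Fin dB × Fin dC)) :
    ‖Phi ψ‖ = ‖ψ‖ ^ 2 := by
  have h : ‖Phi ψ‖ ^ 2 = (‖ψ‖ ^ 2) ^ 2 := by
    rw [PiLp.norm_sq_eq_of_L2, PiLp.norm_sq_eq_of_L2]
    rw [← Equiv.sum_comp (eSplit (dA := dA) (dB := dB) (dC := dC)) (fun x => ‖Phi ψ x‖ ^ 2)]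
    rw [Fintype.sum_prod_type, sq]
    rw [Finset.sum_mul_sum]
    refine Finset.sum_congr rfl fun p _ => Finset.sum_congr rfl fun q _ => ?_
    simp only [Phi, eSplit, Equiv.coe_fn_mk, WithLp.ofLp_toLp, norm_mul]
    ring
  have h1 : (0:ℝ) ≤ ‖Phi ψ‖ := norm_nonneg _
  have h2 : (0:ℝ) ≤ ‖ψ‖ ^ 2 := sq_nonneg _
  nlinarith [h]

lemma F2_inv (ψ : EuclideanSpace ℂ (Fin dA × Fin dB × Fin dC)) (t : Bool × Bool × Bool)
    (x : Idx2 dA dB dC) : F2 ψ (σ3 t x) = F2 ψ x := by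
  rw [F2_eq, F2_eq]
  congr 1
  rw [← Equiv.sum_comp (bxor3_invol t).toPerm (fun s => Phi ψ (σ3 s x))]
  refine Finset.sum_congr rfl fun s _ => ?_
  rw [σ3_σ3]
  rfl

lemma card8 : Fintype.card (Bool × Bool × Bool) = 8 := by simp

lemma inner_Phi_F2 (ψ : EuclideanSpace ℂ (Fin dA × Fin dB × Fin dC)) :
    ⟪Phi ψ, F2 ψ⟫_ℂ = ⟪F2 ψ, F2 ψ⟫_ℂ := by
  simp only [PiLp.inner_apply, RCLike.inner_apply']
  symm
  calc ∑ x, starRingEnd ℂ (F2 ψ x) * F2 ψ x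
      = ∑ x : Idx2 dA dB dC, ((8:ℂ)⁻¹ * ∑ s : Bool × Bool × Bool,
          starRingEnd ℂ (Phi ψ (σ3 s x))) * F2 ψ x := by
        refine Finset.sum_congr rfl fun x _ => ?_
        rw [F2_eq, map_mul, map_inv₀, map_sum, Complex.conj_ofNat]
    _ = ∑ s : Bool × Bool × Bool, ∑ x : Idx2 dA dB dC,
          (8:ℂ)⁻¹ * (starRingEnd ℂ (Phi ψ (σ3 s x)) * F2 ψ x) := by
        simp_rw [mul_assoc, Finset.sum_mul, Finset.mul_sum]
        exact Finset.sum_comm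
    _ = ∑ s : Bool × Bool × Bool, ∑ x : Idx2 dA dB dC,
          (8:ℂ)⁻¹ * (starRingEnd ℂ (Phi ψ x) * F2 ψ x) := by
        refine Finset.sum_congr rfl fun s _ => ?_
        rw [← Equiv.sum_comp (σE (dA := dA) (dB := dB) (dC := dC) s)
          (fun x => (8:ℂ)⁻¹ * (starRingEnd ℂ (Phi ψ x) * F2 ψ x))]
        refine Finset.sum_congr rfl fun x _ => ?_
        have h1 : (σE (dA := dA) (dB := dB) (dC := dC) s) x = σ3 s x := rfl
        rw [h1, F2_inv]
    _ = ∑ x : Idx2 dA dB dC, starRingEnd ℂ (Phi ψ x) * F2 ψ x := by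
        rw [Finset.sum_comm]
        refine Finset.sum_congr rfl fun x _ => ?_
        rw [Finset.sum_const, Finset.card_univ, card8, nsmul_eq_mul]
        push_cast; ring

lemma Phi_eq_F2 (ψ : EuclideanSpace ℂ (Fin dA × Fin dB × Fin dC)) (hψ : ‖ψ‖ = 1)
    (h : ‖F2 ψ‖ = 1) : Phi ψ = F2 ψ := by
  have hP : ‖Phi ψ‖ = 1 := by rw [norm_Phi, hψ]; norm_num
  have hin : ⟪Phi ψ, F2 ψ⟫_ℂ = ⟪F2 ψ, F2 ψ⟫_ℂ := inner_Phi_F2 ψ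
  have hre : RCLike.re ⟪Phi ψ, F2 ψ⟫_ℂ = 1 := by
    rw [hin, inner_self_eq_norm_sq, h]; norm_num
  have hns : ‖Phi ψ - F2 ψ‖ ^ 2 = 0 := by
    rw [@norm_sub_sq ℂ, hP, h, hre]; norm_num
  have : Phi ψ - F2 ψ = 0 := by
    rwa [pow_eq_zero_iff (two_ne_zero), norm_eq_zero] at hns
  linear_combination (norm := module) this

lemma Phi_inv (ψ : EuclideanSpace ℂ (Fin dA × Fin dB × Fin dC)) (hψ : ‖ψ‖ = 1)
    (h : ‖F2 ψ‖ = 1) (t : Bool × Bool × Bool) (x : Idx2 dA dB dC) :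
    Phi ψ (σ3 t x) = Phi ψ x := by
  have he := Phi_eq_F2 ψ hψ h
  have h1 : Phi ψ (σ3 t x) = F2 ψ (σ3 t x) := by rw [he]
  rw [h1, F2_inv, ← he]

lemma norm_prodVec3 (a : EuclideanSpace ℂ (Fin dA)) (b : EuclideanSpace ℂ (Fin dB))
    (c : EuclideanSpace ℂ (Fin dC)) : ‖prodVec3 a b c‖ = ‖a‖ * ‖b‖ * ‖c‖ := by
  have h : ‖prodVec3 a b c‖ ^ 2 = (‖a‖ * ‖b‖ * ‖c‖) ^ 2 := by
    rw [PiLp.norm_sq_eq_of_L2, mul_pow, mul_pow, PiLp.norm_sq_eq_of_L2,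
      PiLp.norm_sq_eq_of_L2, PiLp.norm_sq_eq_of_L2]
    rw [Fintype.sum_prod_type]
    rw [Finset.sum_mul_sum, Finset.sum_mul_sum]
    refine Finset.sum_congr rfl fun i _ => ?_
    rw [Fintype.sum_prod_type, Finset.sum_comm]
    refine Finset.sum_congr rfl fun k _ => ?_
    rw [Finset.sum_mul]
    refine Finset.sum_congr rfl fun j _ => ?_
    simp only [prodVec3, WithLp.ofLp_toLp, norm_mul]
    ring
  have h1 : (0:ℝ) ≤ ‖prodVec3 a b c‖ := norm_nonneg _
  have h2 : (0:ℝ) ≤ ‖a‖ * ‖b‖ * ‖c‖ := by positivity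
  nlinarith [h]

/-- The two-copy product test passes with certainty iff the state is a product state:
for a unit vector `ψ ∈ H_A⊗H_B⊗H_C`, `‖Π₂^{⊗3} ψ^{⊗2}‖ = 1` iff
`ψ = a⊗b⊗c` for unit vectors `a`, `b`, `c`. -/
theorem product_test_certain_iff_product
    (ψ : EuclideanSpace ℂ (Fin dA × Fin dB × Fin dC)) (hψ : ‖ψ‖ = 1) :
    ‖F2 ψ‖ = 1 ↔
      ∃ (a : EuclideanSpace ℂ (Fin dA)) (b : EuclideanSpace ℂ (Fin dB))
        (c : EuclideanSpace ℂ (Fin dC)),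
        ‖a‖ = 1 ∧ ‖b‖ = 1 ∧ ‖c‖ = 1 ∧ ψ = prodVec3 a b c := by
  constructor
  · intro h
    have hswap := Phi_inv ψ hψ h
    have hA : ∀ (i i' : Fin dA) (j j' : Fin dB) (k k' : Fin dC),
        ψ (i', j, k) * ψ (i, j', k') = ψ (i, j, k) * ψ (i', j', k') := by
      intro i i' j j' k k'
      simpa [Phi, σ3, sw] using hswap (true, false, false) ((i, i'), (j, j'), (k, k'))
    have hB : ∀ (i i' : Fin dA) (j j' : Fin dB) (k k' : Fin dC),
        ψ (i, j', k) * ψ (i', j, k') = ψ (i, j, k) * ψ (i', j', k') := by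
      intro i i' j j' k k'
      simpa [Phi, σ3, sw] using hswap (false, true, false) ((i, i'), (j, j'), (k, k'))
    -- nonzero entry
    obtain ⟨p0, hp0⟩ : ∃ p, ψ p ≠ 0 := by
      by_contra hc
      push_neg at hc
      have : ψ = 0 := PiLp.ext fun p => hc p
      rw [this, norm_zero] at hψ
      norm_num at hψ
    obtain ⟨i0, j0, k0⟩ := p0
    set d : ℂ := ψ (i0, j0, k0) with hd
    have hdne : d ≠ 0 := hp0
    set u : EuclideanSpace ℂ (Fin dA) := WithLp.toLp 2 (fun i => ψ (i, j0, k0)) with hu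
    set v : EuclideanSpace ℂ (Fin dB) := WithLp.toLp 2 (fun j => d⁻¹ * ψ (i0, j, k0)) with hv
    set w : EuclideanSpace ℂ (Fin dC) := WithLp.toLp 2 (fun k => d⁻¹ * ψ (i0, j0, k)) with hw
    have key : ψ = prodVec3 u v w := by
      refine PiLp.ext fun p => ?_
      obtain ⟨i, j, k⟩ := p
      show ψ (i, j, k) = ψ (i, j0, k0) * (d⁻¹ * ψ (i0, j, k0)) * (d⁻¹ * ψ (i0, j0, k))
      have h1 := hA i0 i j j0 k k0
      have h2 := hB i0 i0 j0 j k k0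
      field_simp
      linear_combination d * h1 + ψ (i, j0, k0) * h2
    have hune : u ≠ 0 := by
      intro h0
      have h1 : ψ (i0, j0, k0) = 0 := congrArg (fun v => v i0) h0
      exact hdne (hd ▸ h1)
    have hvne : v ≠ 0 := by
      intro h0
      have h1 : d⁻¹ * ψ (i0, j0, k0) = 0 := congrArg (fun v' => v' j0) h0
      rw [← hd, inv_mul_cancel₀ hdne] at h1
      exact one_ne_zero h1
    have hwne : w ≠ 0 := by
      intro h0
      have h1 : d⁻¹ * ψ (i0, j0, k0) = 0 := congrArg (fun v' => v' k0) h0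
      rw [← hd, inv_mul_cancel₀ hdne] at h1
      exact one_ne_zero h1
    have hupos : 0 < ‖u‖ := norm_pos_iff.mpr hune
    have hvpos : 0 < ‖v‖ := norm_pos_iff.mpr hvne
    have hwpos : 0 < ‖w‖ := norm_pos_iff.mpr hwne
    have hABC : ‖u‖ * ‖v‖ * ‖w‖ = 1 := by
      rw [← norm_prodVec3, ← key, hψ]
    refine ⟨((‖u‖ : ℂ))⁻¹ • u, ((‖v‖ : ℂ))⁻¹ • v, ((‖w‖ : ℂ))⁻¹ • w, ?_, ?_, ?_, ?_⟩
    · rw [norm_smul]; simp [hupos.ne', inv_mul_cancel₀ hupos.ne']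
    · rw [norm_smul]; simp [hvpos.ne', inv_mul_cancel₀ hvpos.ne']
    · rw [norm_smul]; simp [hwpos.ne', inv_mul_cancel₀ hwpos.ne']
    · refine PiLp.ext fun p => ?_
      have hcoe : ((‖u‖ : ℂ)) * (‖v‖ : ℂ) * (‖w‖ : ℂ) = 1 := by
        rw [← Complex.ofReal_mul, ← Complex.ofReal_mul, hABC, Complex.ofReal_one]
      have : ψ p = u p.1 * v p.2.1 * w p.2.2 := by rw [key]; rfl
      show ψ p = ((‖u‖ : ℂ))⁻¹ * u p.1 * (((‖v‖ : ℂ))⁻¹ * v p.2.1) *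
        (((‖w‖ : ℂ))⁻¹ * w p.2.2)
      have h9 : ((‖u‖ : ℂ))⁻¹ * ((‖v‖ : ℂ))⁻¹ * ((‖w‖ : ℂ))⁻¹ = 1 := by
        rw [← mul_inv, ← mul_inv, hcoe, inv_one]
      rw [this]
      linear_combination (-(u p.1 * v p.2.1 * w p.2.2)) * h9
  · rintro ⟨a, b, c, ha, hb, hc, rfl⟩
    have hs : ∀ (s : Bool × Bool × Bool) (x : Idx2 dA dB dC),
        Phi (prodVec3 a b c) (σ3 s x) = Phi (prodVec3 a b c) x := by
      rintro ⟨s1, s2, s3⟩ x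
      cases s1 <;> cases s2 <;> cases s3 <;>
          simp [Phi, σ3, sw, prodVec3] <;> ring
    have hF : F2 (prodVec3 a b c) = Phi (prodVec3 a b c) := by
      refine PiLp.ext fun x => ?_
      rw [F2_eq, Finset.sum_congr rfl (fun s _ => hs s x), Finset.sum_const,
        Finset.card_univ, card8, nsmul_eq_mul]
      push_cast; ring
    rw [hF, norm_Phi, hψ]
    norm_num
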